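/- arXiv:1711.00070 — 5 statements merged into one kernel-verified Lean document; each statement's English description precedes it below -/
import Mathlib

section
/- For any two probability distributions P' and P'' on S_n, and any Kemeny median σ_{P''} of P'' (i.e., a minimizer of L_{P''}), one has L*_{P'} ≤ L_{P'}(σ_{P''}) ≤ L*_{P'} + 2 Σ_{i<j} |p'_{i,j} - p''_{i,j}|, where L*_{P'} = min_σ L_{P'}(σ). -/
open Finset

/-- The set of ordered pairs (i,j) with i < j. -/
def pairs (n : ℕ) : Finset (Fin n × Fin n) :=
  Finset.univ.filter fun p => p.1 < p.2

/-- Kendall tau distance between two permutations. -/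
noncomputable def dtau {n : ℕ} (σ σ' : Equiv.Perm (Fin n)) : ℝ :=
  ∑ p ∈ pairs n,
    if (((σ p.1 : ℕ) : ℤ) - ((σ p.2 : ℕ) : ℤ)) * (((σ' p.1 : ℕ) : ℤ) - ((σ' p.2 : ℕ) : ℤ)) < 0
    then 1 else 0

/-- Expected Kendall tau distance L_P(σ) = E_{Σ∼P}[d_τ(Σ,σ)]. -/
noncomputable def L {n : ℕ} (P : Equiv.Perm (Fin n) → ℝ) (σ : Equiv.Perm (Fin n)) : ℝ :=
  ∑ τ : Equiv.Perm (Fin n), P τ * dtau τ σ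

/-- Pairwise probability p_{i,j} = P{Σ(i) < Σ(j)}. -/
noncomputable def pp {n : ℕ} (P : Equiv.Perm (Fin n) → ℝ) (i j : Fin n) : ℝ :=
  ∑ τ : Equiv.Perm (Fin n), P τ * (if τ i < τ j then 1 else 0)

/-- P is a probability distribution on S_n. -/
def IsProb {n : ℕ} (P : Equiv.Perm (Fin n) → ℝ) : Prop :=
  (∀ τ, 0 ≤ P τ) ∧ ∑ τ : Equiv.Perm (Fin n), P τ = 1

/-- σ is a Kemeny median of P. -/
def IsMedian {n : ℕ} (P : Equiv.Perm (Fin n) → ℝ) (σ : Equiv.Perm (Fin n)) : Prop :=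
  ∀ τ, L P σ ≤ L P τ

/-- L*_P = min_σ L_P(σ). -/
noncomputable def Lstar {n : ℕ} (P : Equiv.Perm (Fin n) → ℝ) : ℝ :=
  ⨅ σ : Equiv.Perm (Fin n), L P σ

/-- Stochastic transitivity. -/
def StochTrans {n : ℕ} (P : Equiv.Perm (Fin n) → ℝ) : Prop :=
  ∀ i j k : Fin n, 1/2 ≤ pp P i j → 1/2 ≤ pp P j k → 1/2 ≤ pp P i k

/-- Strict stochastic transitivity. -/
def StrictStochTrans {n : ℕ} (P : Equiv.Perm (Fin n) → ℝ) : Prop :=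
  StochTrans P ∧ ∀ i j : Fin n, i < j → pp P i j ≠ 1/2


lemma L_rw {n : ℕ} (P : Equiv.Perm (Fin n) → ℝ) (hP : IsProb P) (σ : Equiv.Perm (Fin n)) :
    L P σ = ∑ p ∈ pairs n, (if σ p.1 < σ p.2 then 1 - pp P p.1 p.2 else pp P p.1 p.2) := by
  unfold L dtau
  simp_rw [Finset.mul_sum]
  rw [Finset.sum_comm]
  refine Finset.sum_congr rfl ?_
  rintro ⟨i, j⟩ hp
  simp only [pairs, Finset.mem_filter] at hp
  have hij : i ≠ j := ne_of_lt hp.2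
  by_cases hσ : σ i < σ j
  · rw [if_pos hσ]
    have : (1 : ℝ) - pp P i j = ∑ τ : Equiv.Perm (Fin n), P τ * (1 - if τ i < τ j then 1 else 0) := by
      simp_rw [mul_sub, mul_one, Finset.sum_sub_distrib, hP.2, pp]
    rw [this]
    refine Finset.sum_congr rfl fun τ _ => ?_
    congr 1
    have hτ : τ i ≠ τ j := fun h => hij (τ.injective h)
    have hB : ((σ i : ℕ) : ℤ) - ((σ j : ℕ) : ℤ) < 0 := by
      have h' : ((σ i : ℕ) : ℤ) < ((σ j : ℕ) : ℤ) := by exact_mod_cast hσ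
      omega
    rcases lt_or_gt_of_ne hτ with h | h
    · have hA : ((τ i : ℕ) : ℤ) - ((τ j : ℕ) : ℤ) < 0 := by
        have h' : ((τ i : ℕ) : ℤ) < ((τ j : ℕ) : ℤ) := by exact_mod_cast h
        omega
      rw [if_neg, if_pos h]
      · ring
      · nlinarith
    · have hA : (0:ℤ) < ((τ i : ℕ) : ℤ) - ((τ j : ℕ) : ℤ) := by
        have h' : ((τ j : ℕ) : ℤ) < ((τ i : ℕ) : ℤ) := by exact_mod_cast h
        omega
      rw [if_pos, if_neg (not_lt_of_gt h)]
      · ring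
      · nlinarith
  · rw [if_neg hσ, pp]
    refine Finset.sum_congr rfl fun τ _ => ?_
    congr 1
    have hτ : τ i ≠ τ j := fun h => hij (τ.injective h)
    have hσ' : σ j < σ i := lt_of_le_of_ne (not_lt.mp hσ) fun h => hij (σ.injective h.symm)
    have hB : (0:ℤ) < ((σ i : ℕ) : ℤ) - ((σ j : ℕ) : ℤ) := by
      have h' : ((σ j : ℕ) : ℤ) < ((σ i : ℕ) : ℤ) := by exact_mod_cast hσ'
      omega
    rcases lt_or_gt_of_ne hτ with h | h
    · have hA : ((τ i : ℕ) : ℤ) - ((τ j : ℕ) : ℤ) < 0 := by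
        have h' : ((τ i : ℕ) : ℤ) < ((τ j : ℕ) : ℤ) := by exact_mod_cast h
        omega
      rw [if_pos, if_pos h]
      nlinarith
    · have hA : (0:ℤ) < ((τ i : ℕ) : ℤ) - ((τ j : ℕ) : ℤ) := by
        have h' : ((τ j : ℕ) : ℤ) < ((τ i : ℕ) : ℤ) := by exact_mod_cast h
        omega
      rw [if_neg, if_neg (not_lt_of_gt h)]
      nlinarith

lemma L_diff {n : ℕ} (P' P'' : Equiv.Perm (Fin n) → ℝ) (hP' : IsProb P') (hP'' : IsProb P'')
    (σ : Equiv.Perm (Fin n)) :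
    |L P' σ - L P'' σ| ≤ ∑ p ∈ pairs n, |pp P' p.1 p.2 - pp P'' p.1 p.2| := by
  rw [L_rw P' hP' σ, L_rw P'' hP'' σ, ← Finset.sum_sub_distrib]
  refine (Finset.abs_sum_le_sum_abs _ _).trans (Finset.sum_le_sum fun p _ => ?_)
  split_ifs
  · rw [show (1 - pp P' p.1 p.2) - (1 - pp P'' p.1 p.2) = -(pp P' p.1 p.2 - pp P'' p.1 p.2) by ring,
      abs_neg]
  · exact le_refl _

theorem stmt_1 {n : ℕ} (P' P'' : Equiv.Perm (Fin n) → ℝ)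
    (hP' : IsProb P') (hP'' : IsProb P'')
    (σm : Equiv.Perm (Fin n)) (hσm : IsMedian P'' σm) :
    Lstar P' ≤ L P' σm ∧
      L P' σm ≤ Lstar P' + 2 * ∑ p ∈ pairs n, |pp P' p.1 p.2 - pp P'' p.1 p.2| := by
  
  obtain ⟨σ', hσ'⟩ := Finite.exists_min (L P')
  have hstar : Lstar P' = L P' σ' :=
    le_antisymm (ciInf_le (Finite.bddBelow_range _) σ') (le_ciInf hσ')
  set D := ∑ p ∈ pairs n, |pp P' p.1 p.2 - pp P'' p.1 p.2| with hD
  constructor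
  · exact ciInf_le (Finite.bddBelow_range _) σm
  · have h1 : L P' σm - L P'' σm ≤ D := (abs_le.mp (L_diff P' P'' hP' hP'' σm)).2
    have h2 : L P'' σm ≤ L P'' σ' := hσm σ'
    have h3 : L P'' σ' - L P' σ' ≤ D := by
      have := (abs_le.mp (L_diff P' P'' hP' hP'' σ')).1
      linarith
    rw [hstar]
    linarith
end

section
/- Let P' and P'' be strictly stochastically transitive distributions on S_n with unique Kemeny medians σ*_{P'} and σ*_{P''}, and let h = min_{i<j} |p''_{i,j} - 1/2| > 0. Then d_τ(σ*_{P'}, σ*_{P''}) ≤ (1/h) Σ_{i<j} |p'_{i,j} - p''_{i,j}|. -/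
open Finset

lemma pp_add {n : ℕ} (P : Equiv.Perm (Fin n) → ℝ) (hP : IsProb P) {i j : Fin n} (hij : i ≠ j) :
    pp P i j + pp P j i = 1 := by
  have hterm : ∀ τ : Equiv.Perm (Fin n),
      P τ * (if τ i < τ j then (1:ℝ) else 0) + P τ * (if τ j < τ i then 1 else 0) = P τ := by
    intro τ
    have hne : τ i ≠ τ j := fun hh => hij (τ.injective hh)
    rcases lt_or_gt_of_ne hne with hlt | hlt
    · rw [if_pos hlt, if_neg (asymm hlt), mul_one, mul_zero, add_zero]
    · rw [if_neg (asymm hlt), if_pos hlt, mul_zero, mul_one, zero_add]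
  unfold pp
  rw [← Finset.sum_add_distrib, Finset.sum_congr rfl fun τ _ => hterm τ]
  exact hP.2

lemma pp_ne_half {n : ℕ} {P : Equiv.Perm (Fin n) → ℝ} (hP : IsProb P)
    (hT : StrictStochTrans P) {i j : Fin n} (hij : i ≠ j) : pp P i j ≠ 1/2 := by
  rcases lt_or_gt_of_ne hij with hlt | hlt
  · exact hT.2 i j hlt
  · have hadd := pp_add P hP hij
    have h2 := hT.2 j i hlt
    intro hh; apply h2; linarith

lemma L_eq {n : ℕ} (P : Equiv.Perm (Fin n) → ℝ) (σ : Equiv.Perm (Fin n)) :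
    L P σ = ∑ p ∈ pairs n, (if σ p.1 < σ p.2 then pp P p.2 p.1 else pp P p.1 p.2) := by
  unfold L dtau
  simp_rw [Finset.mul_sum]
  rw [Finset.sum_comm]
  refine Finset.sum_congr rfl fun p hp => ?_
  have hp12 : p.1 < p.2 := (Finset.mem_filter.mp hp).2
  by_cases hσ : σ p.1 < σ p.2
  · rw [if_pos hσ]
    unfold pp
    refine Finset.sum_congr rfl fun τ _ => ?_
    congr 1
    refine if_congr ?_ rfl rfl
    have hz : (((σ p.1 : ℕ) : ℤ)) - ((σ p.2 : ℕ) : ℤ) < 0 := by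
      have : (σ p.1 : ℕ) < (σ p.2 : ℕ) := hσ
      omega
    rw [mul_neg_iff]
    constructor
    · rintro (⟨h1, _⟩ | ⟨_, h2⟩)
      · exact Fin.lt_def.mpr (by omega)
      · exact absurd h2 (by omega)
    · intro hlt
      have : (τ p.2 : ℕ) < (τ p.1 : ℕ) := hlt
      exact Or.inl ⟨by omega, hz⟩
  · rw [if_neg hσ]
    have hne : σ p.1 ≠ σ p.2 := fun hh => (ne_of_lt hp12) (σ.injective hh)
    have hσ' : σ p.2 < σ p.1 := lt_of_le_of_ne (not_lt.mp hσ) (Ne.symm hne)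
    unfold pp
    refine Finset.sum_congr rfl fun τ _ => ?_
    congr 1
    refine if_congr ?_ rfl rfl
    have hz : 0 < (((σ p.1 : ℕ) : ℤ)) - ((σ p.2 : ℕ) : ℤ) := by
      have : (σ p.2 : ℕ) < (σ p.1 : ℕ) := hσ'
      omega
    rw [mul_neg_iff]
    constructor
    · rintro (⟨_, h2⟩ | ⟨h1, _⟩)
      · exact absurd h2 (by omega)
      · exact Fin.lt_def.mpr (by omega)
    · intro hlt
      have : (τ p.1 : ℕ) < (τ p.2 : ℕ) := hlt
      exact Or.inr ⟨by omega, hz⟩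

lemma median_adj {n : ℕ} {P : Equiv.Perm (Fin n) → ℝ} {σ : Equiv.Perm (Fin n)}
    (hσ : IsMedian P σ) {i j : Fin n} (hadj : (σ j : ℕ) = (σ i : ℕ) + 1) :
    pp P j i ≤ pp P i j := by
  have hij : i ≠ j := fun hh => by rw [hh] at hadj; omega
  set τ : Equiv.Perm (Fin n) := (Equiv.swap i j).trans σ with hτdef
  have hτi : τ i = σ j := by simp [hτdef]
  have hτj : τ j = σ i := by simp [hτdef]
  have hτk : ∀ k, k ≠ i → k ≠ j → τ k = σ k := fun k h1 h2 => by
    simp [hτdef, Equiv.swap_apply_of_ne_of_ne h1 h2]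
  have hσne : ∀ a b : Fin n, a ≠ b → (σ a : ℕ) ≠ (σ b : ℕ) :=
    fun a b hab hh => hab (σ.injective (Fin.val_injective hh))
  have hL := hσ τ
  rw [L_eq, L_eq] at hL
  set q : Fin n × Fin n := if i < j then (i, j) else (j, i) with hq
  have hqmem : q ∈ pairs n := by
    unfold pairs
    rcases lt_or_gt_of_ne hij with hlt | hlt
    · rw [hq, if_pos hlt]; simp [hlt]
    · rw [hq, if_neg (asymm hlt)]; simp [hlt]
  have key : ∀ p : Fin n × Fin n, p ∈ pairs n → p ≠ q →
      (if σ p.1 < σ p.2 then pp P p.2 p.1 else pp P p.1 p.2)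
        = (if τ p.1 < τ p.2 then pp P p.2 p.1 else pp P p.1 p.2) := by
    intro p hp hpq
    have hp12 : p.1 < p.2 := (Finset.mem_filter.mp hp).2
    have hp12' : p.1 ≠ p.2 := ne_of_lt hp12
    have hnij : ¬ (p.1 = i ∧ p.2 = j) := by
      rintro ⟨h1, h2⟩
      apply hpq
      have hlt : i < j := by rw [← h1, ← h2]; exact hp12
      rw [hq, if_pos hlt, ← h1, ← h2]
    have hnji : ¬ (p.1 = j ∧ p.2 = i) := by
      rintro ⟨h1, h2⟩
      apply hpq
      have hlt : j < i := by rw [← h1, ← h2]; exact hp12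
      rw [hq, if_neg (asymm hlt), ← h1, ← h2]
    have hiff : ((σ p.1 : ℕ) < (σ p.2 : ℕ)) ↔ ((τ p.1 : ℕ) < (τ p.2 : ℕ)) := by
      rcases eq_or_ne p.1 i with h1i | h1i
      · rcases eq_or_ne p.2 i with h2i | h2i
        · exact absurd (h1i.trans h2i.symm) hp12'
        · rcases eq_or_ne p.2 j with h2j | h2j
          · exact absurd ⟨h1i, h2j⟩ hnij
          · rw [h1i, hτi, hτk p.2 h2i h2j]
            have e1 := hσne p.2 i h2i
            have e2 := hσne p.2 j h2j
            omega
      · rcases eq_or_ne p.1 j with h1j | h1j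
        · rcases eq_or_ne p.2 i with h2i | h2i
          · exact absurd ⟨h1j, h2i⟩ hnji
          · rcases eq_or_ne p.2 j with h2j | h2j
            · exact absurd (h1j.trans h2j.symm) hp12'
            · rw [h1j, hτj, hτk p.2 h2i h2j]
              have e1 := hσne p.2 i h2i
              have e2 := hσne p.2 j h2j
              omega
        · rcases eq_or_ne p.2 i with h2i | h2i
          · rw [h2i, hτi, hτk p.1 h1i h1j]
            have e1 := hσne p.1 i h1i
            have e2 := hσne p.1 j h1j
            omega
          · rcases eq_or_ne p.2 j with h2j | h2j
            · rw [h2j, hτj, hτk p.1 h1i h1j]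
              have e1 := hσne p.1 i h1i
              have e2 := hσne p.1 j h1j
              omega
            · rw [hτk p.1 h1i h1j, hτk p.2 h2i h2j]
    by_cases hc : σ p.1 < σ p.2
    · rw [if_pos hc, if_pos (Fin.lt_def.mpr (hiff.mp hc))]
    · rw [if_neg hc, if_neg (fun hh => hc (Fin.lt_def.mpr (hiff.mpr (Fin.lt_def.mp hh))))]
  have hsplit1 := Finset.add_sum_erase (pairs n)
    (fun p => if σ p.1 < σ p.2 then pp P p.2 p.1 else pp P p.1 p.2) hqmem
  have hsplit2 := Finset.add_sum_erase (pairs n)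
    (fun p => if τ p.1 < τ p.2 then pp P p.2 p.1 else pp P p.1 p.2) hqmem
  have hrest : ∑ p ∈ (pairs n).erase q,
      (if σ p.1 < σ p.2 then pp P p.2 p.1 else pp P p.1 p.2)
      = ∑ p ∈ (pairs n).erase q,
      (if τ p.1 < τ p.2 then pp P p.2 p.1 else pp P p.1 p.2) := by
    refine Finset.sum_congr rfl fun p hp => ?_
    exact key p (Finset.mem_of_mem_erase hp) (Finset.ne_of_mem_erase hp)
  have hmain : (if σ q.1 < σ q.2 then pp P q.2 q.1 else pp P q.1 q.2)
      ≤ (if τ q.1 < τ q.2 then pp P q.2 q.1 else pp P q.1 q.2) := by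
    rw [← hsplit1, ← hsplit2] at hL
    rw [hrest] at hL
    linarith
  have hσij : σ i < σ j := Fin.lt_def.mpr (by omega)
  rcases lt_or_gt_of_ne hij with hlt | hlt
  · rw [hq] at hmain
    rw [if_pos hlt] at hmain
    simp only at hmain
    rw [if_pos hσij, hτi, hτj, if_neg (asymm hσij)] at hmain
    exact hmain
  · rw [hq] at hmain
    rw [if_neg (asymm hlt)] at hmain
    simp only at hmain
    rw [if_neg (asymm hσij), hτi, hτj, if_pos hσij] at hmain
    exact hmain

lemma median_lt {n : ℕ} {P : Equiv.Perm (Fin n) → ℝ} {σ : Equiv.Perm (Fin n)}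
    (hP : IsProb P) (hT : StrictStochTrans P) (hσ : IsMedian P σ) :
    ∀ i j : Fin n, σ i < σ j → 1/2 < pp P i j := by
  have main : ∀ m : ℕ, ∀ i j : Fin n, (σ j : ℕ) = (σ i : ℕ) + m + 1 → 1/2 < pp P i j := by
    intro m
    induction m using Nat.strong_induction_on with
    | _ m ih =>
      intro i j hm
      have hij : i ≠ j := fun hh => by rw [hh] at hm; omega
      rcases Nat.eq_zero_or_pos m with rfl | hmpos
      · have hle := median_adj hσ (show (σ j : ℕ) = (σ i : ℕ) + 1 by omega)
        have hadd := pp_add P hP hij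
        have hne := pp_ne_half hP hT hij
        have h12 : 1/2 ≤ pp P i j := by linarith
        exact lt_of_le_of_ne h12 (Ne.symm hne)
      · have hlt : (σ i : ℕ) + 1 < n := by
          have := (σ j).isLt; omega
        set k := σ.symm ⟨(σ i : ℕ) + 1, by omega⟩ with hk
        have hσk : (σ k : ℕ) = (σ i : ℕ) + 1 := by
          rw [hk]; simp
        have h1 : 1/2 < pp P i k := ih 0 hmpos i k (by omega)
        have h2 : 1/2 < pp P k j := ih (m - 1) (by omega) k j (by omega)
        have h3 : 1/2 ≤ pp P i j := hT.1 i k j h1.le h2.le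
        exact lt_of_le_of_ne h3 (Ne.symm (pp_ne_half hP hT hij))
  intro i j hij
  have : (σ i : ℕ) < (σ j : ℕ) := hij
  exact main ((σ j : ℕ) - (σ i : ℕ) - 1) i j (by omega)

theorem stmt_2 {n : ℕ} (P' P'' : Equiv.Perm (Fin n) → ℝ)
    (hP' : IsProb P') (hP'' : IsProb P'')
    (hT' : StrictStochTrans P') (hT'' : StrictStochTrans P'')
    (σ' σ'' : Equiv.Perm (Fin n))
    (hσ' : IsMedian P' σ') (hσ'u : ∀ τ, IsMedian P' τ → τ = σ')
    (hσ'' : IsMedian P'' σ'') (hσ''u : ∀ τ, IsMedian P'' τ → τ = σ'')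
    (h : ℝ) (hdef : h = sInf {r : ℝ | ∃ i j : Fin n, i < j ∧ r = |pp P'' i j - 1/2|})
    (hpos : 0 < h) :
    dtau σ' σ'' ≤ (1/h) * ∑ p ∈ pairs n, |pp P' p.1 p.2 - pp P'' p.1 p.2| := by
  have hbdd : BddBelow {r : ℝ | ∃ i j : Fin n, i < j ∧ r = |pp P'' i j - 1/2|} := by
    refine ⟨0, ?_⟩
    rintro r ⟨i, j, _, rfl⟩
    exact abs_nonneg _
  have key : ∀ p ∈ pairs n,
      h * (if (((σ' p.1 : ℕ) : ℤ) - ((σ' p.2 : ℕ) : ℤ)) *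
        (((σ'' p.1 : ℕ) : ℤ) - ((σ'' p.2 : ℕ) : ℤ)) < 0 then (1:ℝ) else 0)
      ≤ |pp P' p.1 p.2 - pp P'' p.1 p.2| := by
    intro p hp
    have hp12 : p.1 < p.2 := (Finset.mem_filter.mp hp).2
    have hp12' : p.1 ≠ p.2 := ne_of_lt hp12
    by_cases hd : (((σ' p.1 : ℕ) : ℤ) - ((σ' p.2 : ℕ) : ℤ)) *
        (((σ'' p.1 : ℕ) : ℤ) - ((σ'' p.2 : ℕ) : ℤ)) < 0
    · rw [if_pos hd, mul_one]
      have hh : h ≤ |pp P'' p.1 p.2 - 1/2| := by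
        rw [hdef]
        exact csInf_le hbdd ⟨p.1, p.2, hp12, rfl⟩
      rw [mul_neg_iff] at hd
      rcases hd with ⟨h1, h2⟩ | ⟨h1, h2⟩
      · -- σ' p.2 < σ' p.1, σ'' p.1 < σ'' p.2
        have e1 : σ' p.2 < σ' p.1 := Fin.lt_def.mpr (by omega)
        have e2 : σ'' p.1 < σ'' p.2 := Fin.lt_def.mpr (by omega)
        have b1 : 1/2 < pp P' p.2 p.1 := median_lt hP' hT' hσ' p.2 p.1 e1
        have b1' : pp P' p.1 p.2 < 1/2 := by
          have := pp_add P' hP' hp12'; linarith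
        have b2 : 1/2 < pp P'' p.1 p.2 := median_lt hP'' hT'' hσ'' p.1 p.2 e2
        have habs : |pp P'' p.1 p.2 - 1/2| = pp P'' p.1 p.2 - 1/2 :=
          abs_of_pos (by linarith)
        have hna := neg_abs_le (pp P' p.1 p.2 - pp P'' p.1 p.2)
        linarith
      · have e1 : σ' p.1 < σ' p.2 := Fin.lt_def.mpr (by omega)
        have e2 : σ'' p.2 < σ'' p.1 := Fin.lt_def.mpr (by omega)
        have b1 : 1/2 < pp P' p.1 p.2 := median_lt hP' hT' hσ' p.1 p.2 e1
        have b2 : 1/2 < pp P'' p.2 p.1 := median_lt hP'' hT'' hσ'' p.2 p.1 e2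
        have b2' : pp P'' p.1 p.2 < 1/2 := by
          have := pp_add P'' hP'' hp12'; linarith
        have habs : |pp P'' p.1 p.2 - 1/2| = -(pp P'' p.1 p.2 - 1/2) :=
          abs_of_neg (by linarith)
        have hna := le_abs_self (pp P' p.1 p.2 - pp P'' p.1 p.2)
        linarith
    · rw [if_neg hd, mul_zero]
      exact abs_nonneg _
  have hsum : h * dtau σ' σ'' ≤ ∑ p ∈ pairs n, |pp P' p.1 p.2 - pp P'' p.1 p.2| := by
    unfold dtau
    rw [Finset.mul_sum]
    exact Finset.sum_le_sum key
  rw [one_div, inv_mul_eq_div, le_div_iff₀ hpos]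
  linarith
end

section
/- Suppose that for μ-almost every x the conditional distribution P_x on S_n is stochastically transitive with conditional pairwise probabilities p_{i,j}(x). Then for any ranking rule s, the excess risk is R(s) - R* = 2 Σ_{i<j} ∫ |p_{i,j}(x) - 1/2| · 1{(s(x)(j) - s(x)(i))(p_{i,j}(x) - 1/2) < 0} μ(dx), and R* = Σ_{i<j} (1/2 - ∫ |p_{i,j}(x) - 1/2| μ(dx)). -/
open Finset

open MeasureTheory

instance {n : ℕ} : MeasurableSpace (Equiv.Perm (Fin n)) := ⊤

/-- Risk of a ranking rule s: R(s) = E_{X∼μ}[L_{P_X}(s(X))]. -/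
noncomputable def Risk {n : ℕ} {X : Type*} [MeasurableSpace X] (μ : Measure X)
    (P : X → Equiv.Perm (Fin n) → ℝ) (s : X → Equiv.Perm (Fin n)) : ℝ :=
  ∫ x, L (P x) (s x) ∂μ

/-- Minimum risk over all measurable ranking rules. -/
noncomputable def RiskStar {n : ℕ} {X : Type*} [MeasurableSpace X] (μ : Measure X)
    (P : X → Equiv.Perm (Fin n) → ℝ) : ℝ :=
  sInf {r | ∃ s : X → Equiv.Perm (Fin n), Measurable s ∧ r = Risk μ P s}


section AuxLemmas

variable {n : ℕ}

lemma pp_compl {P : Equiv.Perm (Fin n) → ℝ} (hP : IsProb P) {i j : Fin n} (hij : i ≠ j) :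
    pp P j i = 1 - pp P i j := by
  have h : pp P i j + pp P j i = ∑ τ : Equiv.Perm (Fin n), P τ := by
    rw [pp, pp, ← Finset.sum_add_distrib]
    refine Finset.sum_congr rfl fun τ _ => ?_
    have hne : τ i ≠ τ j := fun h => hij (τ.injective h)
    rcases lt_or_gt_of_ne hne with h1 | h1
    · rw [if_pos h1, if_neg (not_lt.mpr h1.le)]; ring
    · rw [if_neg (not_lt.mpr h1.le), if_pos h1]; ring
  rw [hP.2] at h
  linarith

lemma pp_self (P : Equiv.Perm (Fin n) → ℝ) (i : Fin n) : pp P i i = 0 := by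
  simp [pp]

lemma pp_nonneg {P : Equiv.Perm (Fin n) → ℝ} (hP : IsProb P) (i j : Fin n) : 0 ≤ pp P i j :=
  Finset.sum_nonneg fun τ _ => mul_nonneg (hP.1 τ) (by positivity)

lemma pp_le_one {P : Equiv.Perm (Fin n) → ℝ} (hP : IsProb P) (i j : Fin n) : pp P i j ≤ 1 := by
  have h : pp P i j ≤ ∑ τ : Equiv.Perm (Fin n), P τ := by
    refine Finset.sum_le_sum fun τ _ => ?_
    calc P τ * (if τ i < τ j then (1:ℝ) else 0) ≤ P τ * 1 :=
          mul_le_mul_of_nonneg_left (by split <;> norm_num) (hP.1 τ)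
      _ = P τ := mul_one _
  rw [hP.2] at h
  exact h

/-- per-pair excess term -/
noncomputable def term (P : Equiv.Perm (Fin n) → ℝ) (σ : Equiv.Perm (Fin n))
    (p : Fin n × Fin n) : ℝ :=
  |pp P p.1 p.2 - 1/2| *
    (if (((σ p.2 : ℕ) : ℝ) - ((σ p.1 : ℕ) : ℝ)) * (pp P p.1 p.2 - 1/2) < 0 then 1 else 0)

lemma term_nonneg (P : Equiv.Perm (Fin n) → ℝ) (σ : Equiv.Perm (Fin n)) (p : Fin n × Fin n) :
    0 ≤ term P σ p := by
  unfold term; positivity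

lemma term_le_one {P : Equiv.Perm (Fin n) → ℝ} (hP : IsProb P) (σ : Equiv.Perm (Fin n))
    (p : Fin n × Fin n) : term P σ p ≤ 1 := by
  unfold term
  have h1 : |pp P p.1 p.2 - 1/2| ≤ 1 := by
    rw [abs_le]
    constructor
    · linarith [pp_nonneg hP p.1 p.2]
    · linarith [pp_le_one hP p.1 p.2]
  calc |pp P p.1 p.2 - 1/2| * _ ≤ |pp P p.1 p.2 - 1/2| * 1 := by
        apply mul_le_mul_of_nonneg_left _ (abs_nonneg _)
        split <;> norm_num
    _ ≤ 1 := by linarith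

lemma Ldecomp {P : Equiv.Perm (Fin n) → ℝ} (hP : IsProb P) (σ : Equiv.Perm (Fin n)) :
    L P σ = ∑ p ∈ pairs n, ((1/2 - |pp P p.1 p.2 - 1/2|) + 2 * term P σ p) := by
  rw [L]
  simp only [dtau, Finset.mul_sum]
  rw [Finset.sum_comm]
  refine Finset.sum_congr rfl fun p hp => ?_
  obtain ⟨i, j⟩ := p
  have hij : i < j := by simpa [pairs] using hp
  have hne : i ≠ j := ne_of_lt hij
  have hσ : σ i ≠ σ j := fun h => hne (σ.injective h)
  set q := pp P i j with hq
  have hsum : ∑ τ : Equiv.Perm (Fin n),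
      P τ * (if (((τ i : ℕ) : ℤ) - ((τ j : ℕ) : ℤ)) * (((σ i : ℕ) : ℤ) - ((σ j : ℕ) : ℤ)) < 0
        then (1:ℝ) else 0) = if σ i < σ j then 1 - q else q := by
    rcases lt_or_gt_of_ne hσ with hs | hs
    · rw [if_pos hs, hq, ← pp_compl hP hne, pp]
      refine Finset.sum_congr rfl fun τ _ => ?_
      congr 1
      have hτ : τ i ≠ τ j := fun h => hne (τ.injective h)
      have hσz : (((σ i : ℕ) : ℤ) - ((σ j : ℕ) : ℤ)) < 0 := by
        have : (σ i : ℕ) < (σ j : ℕ) := hs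
        omega
      by_cases h : τ j < τ i
      · rw [if_pos h, if_pos]
        have : ((τ j : ℕ) : ℤ) < ((τ i : ℕ) : ℤ) := by
          exact_mod_cast (show (τ j:ℕ) < (τ i:ℕ) from h)
        exact mul_neg_of_pos_of_neg (by omega) hσz
      · rw [if_neg h, if_neg]
        have h2 : τ i < τ j := lt_of_le_of_ne (not_lt.mp h) hτ
        have : ((τ i : ℕ) : ℤ) < ((τ j : ℕ) : ℤ) := by
          exact_mod_cast (show (τ i:ℕ) < (τ j:ℕ) from h2)
        push_neg
        exact le_of_lt (mul_pos_of_neg_of_neg (by omega) hσz)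
    · rw [if_neg (not_lt.mpr hs.le), hq, pp]
      refine Finset.sum_congr rfl fun τ _ => ?_
      congr 1
      have hτ : τ i ≠ τ j := fun h => hne (τ.injective h)
      have hσz : 0 < (((σ i : ℕ) : ℤ) - ((σ j : ℕ) : ℤ)) := by
        have : (σ j : ℕ) < (σ i : ℕ) := hs
        omega
      by_cases h : τ i < τ j
      · rw [if_pos h, if_pos]
        have : ((τ i : ℕ) : ℤ) < ((τ j : ℕ) : ℤ) := by exact_mod_cast h
        exact mul_neg_of_neg_of_pos (by omega) hσz
      · rw [if_neg h, if_neg]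
        have h2 : τ j < τ i := lt_of_le_of_ne (not_lt.mp h) (Ne.symm hτ)
        have : ((τ j : ℕ) : ℤ) < ((τ i : ℕ) : ℤ) := by exact_mod_cast h2
        push_neg
        exact le_of_lt (mul_pos (by omega) hσz)
  rw [hsum, term]
  simp only
  rcases lt_or_gt_of_ne hσ with hs | hs
  · rw [if_pos hs]
    have hd : (0:ℝ) < ((σ j : ℕ) : ℝ) - ((σ i : ℕ) : ℝ) := by
      have : (σ i : ℕ) < (σ j : ℕ) := hs
      have := Nat.cast_lt (α := ℝ) |>.mpr this
      linarith
    rcases le_or_gt (1/2 : ℝ) q with hq2 | hq2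
    · rw [abs_of_nonneg (by linarith), if_neg (by nlinarith)]
      ring
    · rw [abs_of_neg (by linarith), if_pos (by nlinarith)]
      ring
  · rw [if_neg (not_lt.mpr hs.le)]
    have hd : ((σ j : ℕ) : ℝ) - ((σ i : ℕ) : ℝ) < 0 := by
      have : (σ j : ℕ) < (σ i : ℕ) := hs
      have := Nat.cast_lt (α := ℝ) |>.mpr this
      linarith
    rcases le_or_gt q (1/2 : ℝ) with hq2 | hq2
    · rw [abs_of_nonpos (by linarith), if_neg (by nlinarith)]
      ring
    · rw [abs_of_pos (by linarith), if_pos (by nlinarith)]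
      ring

/-! ### Construction of the optimal permutation -/

noncomputable def score (q : Fin n → Fin n → ℝ) (i : Fin n) : ℕ :=
  (Finset.univ.filter fun k => 1/2 < q k i).card

noncomputable def skey (q : Fin n → Fin n → ℝ) (i : Fin n) : ℕ :=
  n * score q i + i.val

lemma skey_inj (q : Fin n → Fin n → ℝ) : Function.Injective (skey q) := by
  intro i j h
  unfold skey at h
  have hi' : (n * score q i + i.val) % n = i.val := by
    rw [Nat.mul_add_mod, Nat.mod_eq_of_lt i.isLt]
  have hj' : (n * score q j + j.val) % n = j.val := by
    rw [Nat.mul_add_mod, Nat.mod_eq_of_lt j.isLt]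
  exact Fin.ext (by rw [← hi', ← hj', h])

noncomputable def optPerm (q : Fin n → Fin n → ℝ) : Equiv.Perm (Fin n) :=
  (Tuple.sort (skey q))⁻¹

lemma optPerm_lt (q : Fin n → Fin n → ℝ) {i j : Fin n}
    (h : skey q i < skey q j) : optPerm q i < optPerm q j := by
  have hmono : StrictMono (skey q ∘ Tuple.sort (skey q)) :=
    (Tuple.monotone_sort (skey q)).strictMono_of_injective
      ((skey_inj q).comp (Tuple.sort (skey q)).injective)
  have h2 : skey q (Tuple.sort (skey q) (optPerm q i)) <
      skey q (Tuple.sort (skey q) (optPerm q j)) := by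
    simpa [optPerm] using h
  exact hmono.lt_iff_lt.mp h2

lemma score_lt {P : Equiv.Perm (Fin n) → ℝ} (hP : IsProb P) (hT : StochTrans P)
    {i j : Fin n} (h : 1/2 < pp P i j) :
    score (fun a b => pp P a b) i < score (fun a b => pp P a b) j := by
  have hij : i ≠ j := by
    intro he; rw [he, pp_self] at h; linarith
  apply Finset.card_lt_card
  constructor
  · intro k hk
    simp only [Finset.mem_filter, Finset.mem_univ, true_and] at hk ⊢
    by_contra hkj
    push_neg at hkj
    have hki : k ≠ i := by intro he; rw [he, pp_self] at hk; linarith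
    have hkj' : k ≠ j := by
      intro he; subst he
      rw [pp_compl hP hij] at hk
      linarith
    have h1 : 1/2 ≤ pp P j k := by
      rw [pp_compl hP hkj']; linarith
    have h2 : 1/2 ≤ pp P k i := hk.le
    have h3 : 1/2 ≤ pp P j i := hT j k i h1 h2
    rw [pp_compl hP hij] at h3
    linarith
  · intro hsub
    have hi : i ∈ Finset.univ.filter fun k => 1/2 < pp P k j := by
      simp only [Finset.mem_filter, Finset.mem_univ, true_and]; exact h
    have := hsub hi
    simp only [Finset.mem_filter, Finset.mem_univ, true_and] at this
    rw [pp_self] at this; linarith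

lemma optPerm_opt {P : Equiv.Perm (Fin n) → ℝ} (hP : IsProb P) (hT : StochTrans P)
    {i j : Fin n} (h : 1/2 < pp P i j) :
    optPerm (fun a b => pp P a b) i < optPerm (fun a b => pp P a b) j := by
  apply optPerm_lt
  unfold skey
  have h1 : score (fun a b => pp P a b) i + 1 ≤ score (fun a b => pp P a b) j :=
    score_lt hP hT h
  calc n * score (fun a b => pp P a b) i + i.val
      < n * score (fun a b => pp P a b) i + n := by omega
    _ = n * (score (fun a b => pp P a b) i + 1) := by ring
    _ ≤ n * score (fun a b => pp P a b) j := Nat.mul_le_mul_left n h1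
    _ ≤ n * score (fun a b => pp P a b) j + j.val := Nat.le_add_right _ _

lemma optPerm_term_zero {P : Equiv.Perm (Fin n) → ℝ} (hP : IsProb P) (hT : StochTrans P)
    {p : Fin n × Fin n} (hp : p ∈ pairs n) :
    term P (optPerm (fun a b => pp P a b)) p = 0 := by
  obtain ⟨i, j⟩ := p
  have hij : i < j := by simpa [pairs] using hp
  set σ := optPerm (fun a b => pp P a b) with hσdef
  unfold term
  simp only
  rcases lt_trichotomy (pp P i j) (1/2 : ℝ) with hq | hq | hq
  · have h2 : 1/2 < pp P j i := by rw [pp_compl hP hij.ne]; linarith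
    have hlt : (σ j : ℕ) < (σ i : ℕ) := optPerm_opt hP hT h2
    have hc : ((σ j : ℕ) : ℝ) < ((σ i : ℕ) : ℝ) := by exact_mod_cast hlt
    rw [if_neg (by nlinarith)]
    ring
  · rw [hq]; simp
  · have hlt : (σ i : ℕ) < (σ j : ℕ) := optPerm_opt hP hT hq
    have hc : ((σ i : ℕ) : ℝ) < ((σ j : ℕ) : ℝ) := by exact_mod_cast hlt
    rw [if_neg (by nlinarith)]
    ring

lemma dtau_nonneg (τ σ : Equiv.Perm (Fin n)) : 0 ≤ dtau τ σ := by
  unfold dtau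
  apply Finset.sum_nonneg
  intro p _
  split <;> norm_num

lemma dtau_le (τ σ : Equiv.Perm (Fin n)) : dtau τ σ ≤ ((pairs n).card : ℝ) := by
  unfold dtau
  calc (∑ p ∈ pairs n, if (((τ p.1 : ℕ) : ℤ) - ((τ p.2 : ℕ) : ℤ)) *
          (((σ p.1 : ℕ) : ℤ) - ((σ p.2 : ℕ) : ℤ)) < 0 then (1:ℝ) else 0)
      ≤ ∑ _p ∈ pairs n, (1:ℝ) := by
        apply Finset.sum_le_sum
        intro p _
        split <;> norm_num
    _ = ((pairs n).card : ℝ) := by simp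

lemma L_nonneg {P : Equiv.Perm (Fin n) → ℝ} (hP : IsProb P) (σ : Equiv.Perm (Fin n)) :
    0 ≤ L P σ :=
  Finset.sum_nonneg fun τ _ => mul_nonneg (hP.1 τ) (dtau_nonneg τ σ)

lemma L_le {P : Equiv.Perm (Fin n) → ℝ} (hP : IsProb P) (σ : Equiv.Perm (Fin n)) :
    L P σ ≤ ((pairs n).card : ℝ) := by
  calc L P σ ≤ ∑ τ : Equiv.Perm (Fin n), P τ * ((pairs n).card : ℝ) :=
        Finset.sum_le_sum fun τ _ =>
          mul_le_mul_of_nonneg_left (dtau_le τ σ) (hP.1 τ)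
    _ = ((pairs n).card : ℝ) := by rw [← Finset.sum_mul, hP.2, one_mul]

end AuxLemmas

theorem stmt_11 {n : ℕ} {X : Type*} [MeasurableSpace X]
    (μ : Measure X) [IsProbabilityMeasure μ]
    (P : X → Equiv.Perm (Fin n) → ℝ)
    (hP : ∀ x, IsProb (P x)) (hmeas : ∀ τ, Measurable fun x => P x τ)
    (hT : ∀ᵐ x ∂μ, StochTrans (P x))
    (s : X → Equiv.Perm (Fin n)) (hs : Measurable s) :
    Risk μ P s - RiskStar μ P =
      2 * ∑ p ∈ pairs n, ∫ x, |pp (P x) p.1 p.2 - 1/2| *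
        (if (((s x p.2 : ℕ) : ℝ) - ((s x p.1 : ℕ) : ℝ)) * (pp (P x) p.1 p.2 - 1/2) < 0
         then 1 else 0) ∂μ ∧
    RiskStar μ P = ∑ p ∈ pairs n, (1/2 - ∫ x, |pp (P x) p.1 p.2 - 1/2| ∂μ) := by
  classical
  -- measurability of the pairwise probabilities
  have hppm : ∀ a b : Fin n, Measurable fun x => pp (P x) a b := by
    intro a b
    unfold pp
    exact Finset.measurable_sum _ fun τ _ => (hmeas τ).mul measurable_const
  -- the optimal ranking rule
  set sstar : X → Equiv.Perm (Fin n) := fun x => optPerm (fun a b => pp (P x) a b) with hsstar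
  have hsstarm : Measurable sstar := by
    have hFm : Measurable (fun x => fun i => score (fun a b => pp (P x) a b) i) := by
      apply measurable_pi_lambda
      intro i
      have he : (fun x => score (fun a b => pp (P x) a b) i)
          = fun x => ∑ k : Fin n, if 1/2 < pp (P x) k i then 1 else 0 := by
        funext x
        rw [score, Finset.card_filter]
      rw [he]
      exact Finset.measurable_sum _ fun k _ =>
        Measurable.ite (measurableSet_lt measurable_const (hppm k i))
          measurable_const measurable_const
    have hGm : Measurable (fun f : Fin n → ℕ => (Tuple.sort (fun i => n * f i + i.val))⁻¹) :=
      measurable_of_countable _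
    exact hGm.comp hFm
  -- measurability of x ↦ L (P x) (t x)
  have hLm : ∀ t : X → Equiv.Perm (Fin n), Measurable t →
      Measurable (fun x => L (P x) (t x)) := by
    intro t ht
    unfold L
    exact Finset.measurable_sum _ fun τ _ =>
      (hmeas τ).mul ((measurable_from_top (f := dtau τ)).comp ht)
  -- integrability of x ↦ L (P x) (t x)
  have hIntL : ∀ t : X → Equiv.Perm (Fin n), Measurable t →
      Integrable (fun x => L (P x) (t x)) μ := by
    intro t ht
    refine (integrable_const (((pairs n).card : ℝ))).mono' (hLm t ht).aestronglyMeasurable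
      (ae_of_all _ fun x => ?_)
    rw [Real.norm_eq_abs, abs_of_nonneg (L_nonneg (hP x) (t x))]
    exact L_le (hP x) (t x)
  -- integrability of absolute deviations
  have hmabs : ∀ p : Fin n × Fin n, Measurable fun x => |pp (P x) p.1 p.2 - 1/2| :=
    fun p => ((hppm p.1 p.2).sub measurable_const).abs
  have hIabs : ∀ p : Fin n × Fin n, Integrable (fun x => |pp (P x) p.1 p.2 - 1/2|) μ := by
    intro p
    refine (integrable_const (1:ℝ)).mono' (hmabs p).aestronglyMeasurable
      (ae_of_all _ fun x => ?_)
    rw [Real.norm_eq_abs, abs_abs, abs_le]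
    constructor
    · linarith [pp_nonneg (hP x) p.1 p.2]
    · linarith [pp_le_one (hP x) p.1 p.2]
  -- integrability of the per-pair excess terms
  have hterm_m : ∀ (t : X → Equiv.Perm (Fin n)), Measurable t → ∀ p : Fin n × Fin n,
      Measurable (fun x => term (P x) (t x) p) := by
    intro t ht p
    unfold term
    refine (hmabs p).mul (Measurable.ite ?_ measurable_const measurable_const)
    apply measurableSet_lt _ measurable_const
    refine Measurable.mul ?_ ((hppm p.1 p.2).sub measurable_const)
    exact ((measurable_from_top (f := fun σ : Equiv.Perm (Fin n) => ((σ p.2 : ℕ) : ℝ))).comp ht).sub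
      ((measurable_from_top (f := fun σ : Equiv.Perm (Fin n) => ((σ p.1 : ℕ) : ℝ))).comp ht)
  have hIterm : ∀ (t : X → Equiv.Perm (Fin n)), Measurable t → ∀ p : Fin n × Fin n,
      Integrable (fun x => term (P x) (t x) p) μ := by
    intro t ht p
    refine (integrable_const (1:ℝ)).mono' (hterm_m t ht p).aestronglyMeasurable
      (ae_of_all _ fun x => ?_)
    rw [Real.norm_eq_abs, abs_of_nonneg (term_nonneg _ _ _)]
    exact term_le_one (hP x) (t x) p
  -- the pointwise minimum
  set Lmin : X → ℝ := fun x => ∑ p ∈ pairs n, (1/2 - |pp (P x) p.1 p.2 - 1/2|) with hLmin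
  have hIntLmin : Integrable Lmin μ := by
    apply integrable_finset_sum
    intro p _
    exact (integrable_const (1/2 : ℝ)).sub (hIabs p)
  -- pointwise decomposition at the rule level
  have hLd : ∀ (t : X → Equiv.Perm (Fin n)) (x : X),
      L (P x) (t x) = Lmin x + 2 * ∑ p ∈ pairs n, term (P x) (t x) p := by
    intro t x
    rw [Ldecomp (hP x) (t x), hLmin]
    simp only [Finset.sum_add_distrib, Finset.mul_sum]
  -- every measurable rule has risk at least ∫ Lmin
  have hlb : ∀ r ∈ {r | ∃ t : X → Equiv.Perm (Fin n), Measurable t ∧ r = Risk μ P t},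
      (∫ x, Lmin x ∂μ) ≤ r := by
    rintro r ⟨t, ht, rfl⟩
    rw [Risk]
    refine integral_mono hIntLmin (hIntL t ht) fun x => ?_
    rw [hLd t x]
    have h0 : 0 ≤ ∑ p ∈ pairs n, term (P x) (t x) p :=
      Finset.sum_nonneg fun p _ => term_nonneg _ _ _
    linarith
  -- the optimal rule achieves ∫ Lmin
  have hstar : Risk μ P sstar = ∫ x, Lmin x ∂μ := by
    rw [Risk]
    apply integral_congr_ae
    filter_upwards [hT] with x hx
    rw [hLd sstar x]
    have hz : ∀ p ∈ pairs n, term (P x) (sstar x) p = 0 := fun p hp =>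
      optPerm_term_zero (hP x) hx hp
    rw [Finset.sum_congr rfl hz]
    simp
  -- identification of the optimal risk
  have hRS : RiskStar μ P = ∫ x, Lmin x ∂μ := by
    rw [RiskStar]
    apply le_antisymm
    · exact csInf_le ⟨_, hlb⟩ ⟨sstar, hsstarm, hstar.symm⟩
    · exact le_csInf ⟨Risk μ P sstar, sstar, hsstarm, rfl⟩ hlb
  constructor
  · rw [hRS, Risk, ← integral_sub (hIntL s hs) hIntLmin]
    have he1 : (∫ x, (L (P x) (s x) - Lmin x) ∂μ)
        = ∫ x, 2 * ∑ p ∈ pairs n, term (P x) (s x) p ∂μ := by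
      apply integral_congr_ae
      refine ae_of_all _ fun x => ?_
      show L (P x) (s x) - Lmin x = 2 * ∑ p ∈ pairs n, term (P x) (s x) p
      rw [hLd s x]
      ring
    have he2 : (∫ x, 2 * ∑ p ∈ pairs n, term (P x) (s x) p ∂μ)
        = 2 * ∑ p ∈ pairs n, ∫ x, term (P x) (s x) p ∂μ := by
      rw [integral_const_mul]
      congr 1
      exact integral_finset_sum _ (fun p _ => hIterm s hs p)
    rw [he1, he2]
    simp only [term]
  · rw [hRS]
    have hsum : (∫ x, ∑ p ∈ pairs n, (1/2 - |pp (P x) p.1 p.2 - 1/2|) ∂μ)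
        = ∑ p ∈ pairs n, ∫ x, (1/2 - |pp (P x) p.1 p.2 - 1/2|) ∂μ :=
      integral_finset_sum _ (fun p _ => (integrable_const (1/2:ℝ)).sub (hIabs p))
    rw [hLmin]
    rw [hsum]
    refine Finset.sum_congr rfl fun p _ => ?_
    rw [integral_sub (integrable_const _) (hIabs p), integral_const]
    simp
end

section
/- Suppose P_x is stochastically transitive for all x and the map x ↦ (p_{i,j}(x))_{i<j} is M-Lipschitz in the sense Σ_{i<j} |p_{i,j}(x) - p_{i,j}(x')| ≤ M‖x - x'‖. Then for any partition P of X and any ranking rule s_P that on each cell C takes as value a Kemeny median of P_C, the excess risk satisfies R(s_P) - R* ≤ M δ_P, where δ_P = max_{C∈P} sup_{(x,x')∈C²} ‖x - x'‖. -/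
open Finset

open MeasureTheory

/-- Conditional law of Σ given X ∈ C. -/
noncomputable def condP {n : ℕ} {X : Type*} [MeasurableSpace X] (μ : Measure X)
    (P : X → Equiv.Perm (Fin n) → ℝ) (C : Set X) (τ : Equiv.Perm (Fin n)) : ℝ :=
  (∫ x in C, P x τ ∂μ) / (μ C).toReal

/-!
For a stochastically transitive law the pairwise majorities form a ranking, so the pointwise
optimum `L*_{P_x}` is attained by following the majorities of `P_x`; hence `R*` is at least the
integral of that optimum. On a cell `C`, the Kemeny median of `P_C` does at least as well on `C`
as the majority ranking of `P_y`, for every `y ∈ C`. Averaging over `y ∈ C` bounds `μ(C)` times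
the regret on `C` by a double integral over `C × C`; symmetrising its integrand in `(x, y)`
bounds it by `∑_{i<j} |p_{i,j}(x) - p_{i,j}(y)| ≤ M δ` without losing a factor `2`.
-/

namespace Ranking

section Pairwise

variable {n : ℕ}

lemma mem_pairs {p : Fin n × Fin n} : p ∈ pairs n ↔ p.1 < p.2 := by
  simp [pairs]

lemma le_one_of_isProb {P : Equiv.Perm (Fin n) → ℝ} (hP : IsProb P) (τ : Equiv.Perm (Fin n)) :
    P τ ≤ 1 :=
  hP.2 ▸ Finset.single_le_sum (fun τ _ => hP.1 τ) (Finset.mem_univ τ)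

lemma pp_nonneg {P : Equiv.Perm (Fin n) → ℝ} (hP : IsProb P) (i j : Fin n) : 0 ≤ pp P i j :=
  Finset.sum_nonneg fun τ _ => mul_nonneg (hP.1 τ) (by positivity)

lemma pp_le_one {P : Equiv.Perm (Fin n) → ℝ} (hP : IsProb P) (i j : Fin n) : pp P i j ≤ 1 :=
  hP.2 ▸ Finset.sum_le_sum fun τ _ => mul_le_of_le_one_right (hP.1 τ) (by split_ifs <;> norm_num)

lemma pp_self (P : Equiv.Perm (Fin n) → ℝ) (i : Fin n) : pp P i i = 0 := by
  simp [pp]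

lemma pp_add_pp_swap {P : Equiv.Perm (Fin n) → ℝ} (hP : IsProb P) {i j : Fin n} (hij : i ≠ j) :
    pp P i j + pp P j i = 1 := by
  rw [pp, pp, ← Finset.sum_add_distrib]
  refine (Finset.sum_congr rfl fun τ _ => ?_).trans hP.2
  rcases lt_or_gt_of_ne (τ.injective.ne hij) with h | h
  · simp only [h, h.not_gt, if_true, if_false, mul_one, mul_zero, add_zero]
  · simp only [h, h.not_gt, if_true, if_false, mul_one, mul_zero, zero_add]

lemma discordant_iff {a b c d : Fin n} (hab : a ≠ b) (hcd : c ≠ d) :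
    (((a : ℕ) : ℤ) - (b : ℕ)) * (((c : ℕ) : ℤ) - (d : ℕ)) < 0 ↔ (a < b ↔ d < c) := by
  rw [Fin.ne_iff_vne] at hab hcd
  rw [mul_neg_iff, Fin.lt_def, Fin.lt_def]
  omega

lemma L_eq_sum_pairs {P : Equiv.Perm (Fin n) → ℝ} (hP : IsProb P) (σ : Equiv.Perm (Fin n)) :
    L P σ = ∑ p ∈ pairs n, if σ p.1 < σ p.2 then 1 - pp P p.1 p.2 else pp P p.1 p.2 := by
  simp_rw [L, dtau, Finset.mul_sum]
  rw [Finset.sum_comm]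
  refine Finset.sum_congr rfl fun p hp => ?_
  have hne : p.1 ≠ p.2 := (mem_pairs.mp hp).ne
  simp_rw [discordant_iff (Equiv.injective _ |>.ne hne) (σ.injective.ne hne)]
  split_ifs with hσ
  · rw [← eq_sub_of_add_eq' (pp_add_pp_swap hP hne), pp]
    refine Finset.sum_congr rfl fun τ _ => ?_
    simp only [hσ.not_gt, iff_false, not_lt, (τ.injective.ne hne.symm).le_iff_lt]
  · simp [pp, lt_of_le_of_ne (not_lt.mp hσ) (σ.injective.ne hne.symm)]

lemma exists_perm_lt_iff {r : Fin n → Fin n → Prop} (irrefl : ∀ i, ¬ r i i)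
    (trans : ∀ i j k, r i j → r j k → r i k) (total : ∀ i j, i ≠ j → r i j ∨ r j i) :
    ∃ σ : Equiv.Perm (Fin n), ∀ i j, σ i < σ j ↔ r i j := by
  classical
  let rank : Fin n → Fin n := fun i =>
    ⟨#{j | r j i}, (Finset.card_lt_univ_of_notMem (x := i) (by simp [irrefl])).trans_eq (by simp)⟩
  have rank_lt : ∀ i j, r i j → rank i < rank j := by
    intro i j hij
    show #{k | r k i} < #{k | r k j}
    refine Finset.card_lt_card ?_
    refine (Finset.ssubset_iff_of_subset fun k => ?_).mpr ⟨i, by simp [hij], by simp [irrefl]⟩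
    simpa using fun hki => trans k i j hki hij
  have hinj : Function.Injective rank := by
    intro i j h
    by_contra hne
    rcases total i j hne with hij | hji
    · exact (rank_lt i j hij).ne h
    · exact (rank_lt j i hji).ne h.symm
  refine ⟨Equiv.ofBijective rank hinj.bijective_of_finite, fun i j => ⟨fun h => ?_, rank_lt i j⟩⟩
  by_contra hn
  rcases eq_or_ne i j with rfl | hne
  · exact lt_irrefl _ h
  · exact (rank_lt j i ((total i j hne).resolve_left hn)).not_gt h

/-- The loss under `P` of a ranking that follows the pairwise majorities of `Q`. -/
noncomputable def majorityLoss (P Q : Equiv.Perm (Fin n) → ℝ) : ℝ :=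
  ∑ p ∈ pairs n, if 1/2 ≤ pp Q p.1 p.2 then 1 - pp P p.1 p.2 else pp P p.1 p.2

lemma exists_L_eq_majorityLoss {Q : Equiv.Perm (Fin n) → ℝ} (hQ : IsProb Q)
    (hT : StochTrans Q) : ∃ σ, ∀ P, IsProb P → L P σ = majorityLoss P Q := by
  obtain ⟨σ, hσ⟩ := exists_perm_lt_iff (r := fun i j => 1/2 ≤ pp Q i j)
    (fun i => by norm_num [pp_self]) hT fun i j hij => by
      have := pp_add_pp_swap hQ hij
      by_contra! h
      linarith [h.1, h.2]
  refine ⟨σ, fun P hP => ?_⟩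
  simp_rw [L_eq_sum_pairs hP, hσ, majorityLoss]

lemma majorityLoss_self_le_L {P : Equiv.Perm (Fin n) → ℝ} (hP : IsProb P)
    (σ : Equiv.Perm (Fin n)) : majorityLoss P P ≤ L P σ := by
  rw [L_eq_sum_pairs hP]
  exact Finset.sum_le_sum fun p _ => by split_ifs <;> linarith

lemma majorityLoss_regret_add_le (P Q : Equiv.Perm (Fin n) → ℝ) :
    (majorityLoss P Q - majorityLoss P P) + (majorityLoss Q P - majorityLoss Q Q) ≤
      2 * ∑ p ∈ pairs n, |pp P p.1 p.2 - pp Q p.1 p.2| := by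
  simp only [majorityLoss, ← Finset.sum_sub_distrib, ← Finset.sum_add_distrib, Finset.mul_sum]
  refine Finset.sum_le_sum fun p _ => ?_
  split_ifs <;> cases abs_cases (pp P p.1 p.2 - pp Q p.1 p.2) <;> linarith

lemma sum_pairs_ite_mem_Icc {P : Equiv.Perm (Fin n) → ℝ} (hP : IsProb P)
    (b : Fin n × Fin n → Prop) [DecidablePred b] :
    ∑ p ∈ pairs n, (if b p then 1 - pp P p.1 p.2 else pp P p.1 p.2) ∈
      Set.Icc 0 (#(pairs n) : ℝ) := by
  have h : ∀ p : Fin n × Fin n,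
      (if b p then 1 - pp P p.1 p.2 else pp P p.1 p.2) ∈ Set.Icc (0 : ℝ) 1 := fun p => by
    have := pp_nonneg hP p.1 p.2
    have := pp_le_one hP p.1 p.2
    constructor <;> split_ifs <;> linarith
  refine ⟨Finset.sum_nonneg fun p _ => (h p).1, ?_⟩
  simpa using Finset.sum_le_card_nsmul _ _ 1 fun p _ => (h p).2

lemma L_mem_Icc {P : Equiv.Perm (Fin n) → ℝ} (hP : IsProb P) (σ : Equiv.Perm (Fin n)) :
    L P σ ∈ Set.Icc 0 (#(pairs n) : ℝ) :=
  L_eq_sum_pairs hP σ ▸ sum_pairs_ite_mem_Icc hP _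

lemma majorityLoss_mem_Icc {P : Equiv.Perm (Fin n) → ℝ} (hP : IsProb P)
    (Q : Equiv.Perm (Fin n) → ℝ) : majorityLoss P Q ∈ Set.Icc 0 (#(pairs n) : ℝ) :=
  sum_pairs_ite_mem_Icc hP _

end Pairwise

instance {n : ℕ} : DiscreteMeasurableSpace (Equiv.Perm (Fin n)) :=
  ⟨fun _ => MeasurableSpace.measurableSet_top⟩

section Integrals

variable {n : ℕ} {α : Type*} [MeasurableSpace α]

lemma integral_integral_le_of_add_swap_le {ν : Measure α} [IsFiniteMeasure ν] {f : α → α → ℝ}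
    (hf : Integrable (Function.uncurry f) (ν.prod ν)) {c : ℝ}
    (hc : ∀ᵐ z ∂ν.prod ν, f z.1 z.2 + f z.2 z.1 ≤ 2 * c) :
    ∫ x, ∫ y, f x y ∂ν ∂ν ≤ ν.real Set.univ ^ 2 * c := by
  have hswap : ∫ z, f z.2 z.1 ∂ν.prod ν = ∫ z, f z.1 z.2 ∂ν.prod ν :=
    integral_prod_swap (Function.uncurry f)
  have hsum : ∫ z, (f z.1 z.2 + f z.2 z.1) ∂ν.prod ν ≤ ∫ _ : α × α, 2 * c ∂ν.prod ν :=
    integral_mono_ae (hf.add hf.swap) (integrable_const _) hc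
  have hadd : ∫ z, (f z.1 z.2 + f z.2 z.1) ∂ν.prod ν =
      ∫ z, f z.1 z.2 ∂ν.prod ν + ∫ z, f z.2 z.1 ∂ν.prod ν := integral_add hf hf.swap
  rw [hadd, hswap, integral_const, smul_eq_mul, measureReal_def,
    ← Set.univ_prod_univ, Measure.prod_prod, ENNReal.toReal_mul] at hsum
  rw [integral_integral hf, measureReal_def]
  linarith

variable {P : α → Equiv.Perm (Fin n) → ℝ}

lemma measurable_pp (hmeas : ∀ τ, Measurable fun x => P x τ) (i j : Fin n) :
    Measurable fun x => pp (P x) i j :=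
  Finset.measurable_sum _ fun τ _ => (hmeas τ).mul_const _

lemma measurable_L (hmeas : ∀ τ, Measurable fun x => P x τ) {t : α → Equiv.Perm (Fin n)}
    (ht : Measurable t) : Measurable fun x => L (P x) (t x) := by
  have h : Measurable fun z : α × Equiv.Perm (Fin n) => L (P z.1) z.2 :=
    measurable_from_prod_countable_left fun σ =>
      Finset.measurable_sum (f := fun τ x => P x τ * dtau τ σ) _ fun τ _ => (hmeas τ).mul_const _
  exact h.comp (measurable_id.prodMk ht)

lemma measurable_majorityLoss {Q : α → Equiv.Perm (Fin n) → ℝ}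
    (hPm : ∀ τ, Measurable fun x => P x τ) (hQm : ∀ τ, Measurable fun x => Q x τ) :
    Measurable fun x => majorityLoss (P x) (Q x) :=
  Finset.measurable_sum _ fun p _ =>
    Measurable.ite (measurableSet_le measurable_const (measurable_pp hQm p.1 p.2))
      (measurable_const.sub (measurable_pp hPm p.1 p.2)) (measurable_pp hPm p.1 p.2)

variable {ν : Measure α} [IsFiniteMeasure ν]

lemma integrable_L (hP : ∀ x, IsProb (P x)) (hmeas : ∀ τ, Measurable fun x => P x τ)
    {t : α → Equiv.Perm (Fin n)} (ht : Measurable t) :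
    Integrable (fun x => L (P x) (t x)) ν :=
  .of_mem_Icc _ _ (measurable_L hmeas ht).aemeasurable (ae_of_all _ fun x => L_mem_Icc (hP x) _)

lemma integrable_majorityLoss {Q : α → Equiv.Perm (Fin n) → ℝ} (hP : ∀ x, IsProb (P x))
    (hPm : ∀ τ, Measurable fun x => P x τ) (hQm : ∀ τ, Measurable fun x => Q x τ) :
    Integrable (fun x => majorityLoss (P x) (Q x)) ν :=
  .of_mem_Icc _ _ (measurable_majorityLoss hPm hQm).aemeasurable
    (ae_of_all _ fun x => majorityLoss_mem_Icc (hP x) _)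

lemma L_condP (hP : ∀ x, IsProb (P x)) (hmeas : ∀ τ, Measurable fun x => P x τ)
    (C : Set α) (σ : Equiv.Perm (Fin n)) :
    L (condP ν P C) σ = (∫ x in C, L (P x) σ ∂ν) / ν.real C := by
  simp_rw [L, condP, div_mul_eq_mul_div, ← Finset.sum_div, ← integral_mul_const]
  rw [integral_finsetSum _ fun τ _ => ?_, measureReal_def]
  exact (Integrable.of_mem_Icc 0 1 (hmeas τ).aemeasurable
    (ae_of_all _ fun x => ⟨(hP x).1 τ, le_one_of_isProb (hP x) τ⟩)).mul_const _

lemma setIntegral_L_le_of_isMedian (hP : ∀ x, IsProb (P x))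
    (hmeas : ∀ τ, Measurable fun x => P x τ) {C : Set α} (hpos : 0 < ν.real C)
    {σ : Equiv.Perm (Fin n)} (hmed : IsMedian (condP ν P C) σ) (τ : Equiv.Perm (Fin n)) :
    ∫ x in C, L (P x) σ ∂ν ≤ ∫ x in C, L (P x) τ ∂ν := by
  have h := hmed τ
  rwa [L_condP hP hmeas, L_condP hP hmeas, div_le_div_iff_of_pos_right hpos] at h

end Integrals

section Cells

variable {n : ℕ} {α : Type*} [MeasurableSpace α] {μ : Measure α} [IsFiniteMeasure μ]
  {P : α → Equiv.Perm (Fin n) → ℝ}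

lemma setIntegral_L_sub_majorityLoss_le (hP : ∀ x, IsProb (P x))
    (hmeas : ∀ τ, Measurable fun x => P x τ) (hT : ∀ x, StochTrans (P x)) {C : Set α}
    (hC : MeasurableSet C) (hpos : 0 < μ.real C) {ε : ℝ}
    (hvar : ∀ x ∈ C, ∀ y ∈ C, ∑ p ∈ pairs n, |pp (P x) p.1 p.2 - pp (P y) p.1 p.2| ≤ ε)
    {σ : Equiv.Perm (Fin n)} (hmed : IsMedian (condP μ P C) σ) :
    ∫ x in C, (L (P x) σ - majorityLoss (P x) (P x)) ∂μ ≤ μ.real C * ε := by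
  set ν := μ.restrict C
  set f : α → α → ℝ := fun y x => majorityLoss (P x) (P y) - majorityLoss (P x) (P x)
  have hmeas_fst : ∀ τ, Measurable fun z : α × α => P z.1 τ := fun τ =>
    (hmeas τ).comp measurable_fst
  have hmeas_snd : ∀ τ, Measurable fun z : α × α => P z.2 τ := fun τ =>
    (hmeas τ).comp measurable_snd
  have hf : Integrable (Function.uncurry f) (ν.prod ν) := by
    have h1 := integrable_majorityLoss (ν := ν.prod ν) (P := fun z => P z.2)
      (Q := fun z => P z.1) (fun z => hP z.2) hmeas_snd hmeas_fst
    have h2 := integrable_majorityLoss (ν := ν.prod ν) (P := fun z => P z.2)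
      (Q := fun z => P z.2) (fun z => hP z.2) hmeas_snd hmeas_snd
    exact h1.sub h2
  have hcell : ∀ y, ∫ x in C, (L (P x) σ - majorityLoss (P x) (P x)) ∂μ ≤ ∫ x, f y x ∂ν := by
    intro y
    obtain ⟨σy, hσy⟩ := exists_L_eq_majorityLoss (hP y) (hT y)
    have hmaj : ∀ x, L (P x) σy = majorityLoss (P x) (P y) := fun x => hσy _ (hP x)
    have hle := setIntegral_L_le_of_isMedian hP hmeas hpos hmed σy
    simp only [hmaj] at hle
    have hML := integrable_majorityLoss (ν := ν) hP hmeas hmeas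
    have hsplit : ∫ x in C, (L (P x) σ - majorityLoss (P x) (P x)) ∂μ =
        ∫ x in C, L (P x) σ ∂μ - ∫ x in C, majorityLoss (P x) (P x) ∂μ :=
      integral_sub (integrable_L hP hmeas measurable_const) hML
    have hsplit_y : ∫ x, f y x ∂ν =
        ∫ x in C, majorityLoss (P x) (P y) ∂μ - ∫ x in C, majorityLoss (P x) (P x) ∂μ :=
      integral_sub (integrable_majorityLoss hP hmeas fun τ => measurable_const) hML
    linarith
  have hsymm : ∫ y, ∫ x, f y x ∂ν ∂ν ≤ ν.real Set.univ ^ 2 * ε := by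
    refine integral_integral_le_of_add_swap_le hf ?_
    rw [Measure.prod_restrict]
    refine ae_restrict_of_forall_mem (hC.prod hC) fun z hz => ?_
    linarith [majorityLoss_regret_add_le (P z.2) (P z.1), hvar z.2 hz.2 z.1 hz.1]
  have hbound : μ.real C * ∫ x in C, (L (P x) σ - majorityLoss (P x) (P x)) ∂μ ≤
      μ.real C * (μ.real C * ε) :=
    calc μ.real C * ∫ x in C, (L (P x) σ - majorityLoss (P x) (P x)) ∂μ
        = ∫ _y, ∫ x in C, (L (P x) σ - majorityLoss (P x) (P x)) ∂μ ∂ν := by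
          rw [integral_const, smul_eq_mul, measureReal_restrict_apply_univ]
      _ ≤ ∫ y, ∫ x, f y x ∂ν ∂ν := integral_mono (integrable_const _) hf.integral_prod_left hcell
      _ ≤ ν.real Set.univ ^ 2 * ε := hsymm
      _ = μ.real C * (μ.real C * ε) := by rw [measureReal_restrict_apply_univ]; ring
  exact le_of_mul_le_mul_left hbound hpos

lemma integral_majorityLoss_le_riskStar (hP : ∀ x, IsProb (P x))
    (hmeas : ∀ τ, Measurable fun x => P x τ) :
    ∫ x, majorityLoss (P x) (P x) ∂μ ≤ RiskStar μ P := by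
  refine le_csInf ⟨_, fun _ => 1, measurable_const, rfl⟩ ?_
  rintro r ⟨t, ht, rfl⟩
  exact integral_mono (integrable_majorityLoss hP hmeas hmeas) (integrable_L hP hmeas ht)
    fun x => majorityLoss_self_le_L (hP x) (t x)

end Cells

end Ranking

open Ranking in
theorem stmt_13 {n : ℕ} {E : Type*} [NormedAddCommGroup E] [MeasurableSpace E]
    (μ : Measure E) [IsProbabilityMeasure μ]
    (P : E → Equiv.Perm (Fin n) → ℝ)
    (hP : ∀ x, IsProb (P x)) (hmeas : ∀ τ, Measurable fun x => P x τ)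
    (hT : ∀ x, StochTrans (P x))
    (M : ℝ) (hM : 0 ≤ M)
    (hLip : ∀ x x', ∑ p ∈ pairs n, |pp (P x) p.1 p.2 - pp (P x') p.1 p.2| ≤ M * ‖x - x'‖)
    (K : ℕ) (C : Fin K → Set E)
    (hC : ∀ k, MeasurableSet (C k))
    (hdisj : ∀ k l, k ≠ l → Disjoint (C k) (C l))
    (hcover : (⋃ k, C k) = Set.univ)
    (hpos : ∀ k, 0 < (μ (C k)).toReal)
    (δ : ℝ) (hδ : ∀ k, ∀ x ∈ C k, ∀ x' ∈ C k, ‖x - x'‖ ≤ δ)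
    (σ : Fin K → Equiv.Perm (Fin n)) (s : E → Equiv.Perm (Fin n))
    (hs : ∀ k, ∀ x ∈ C k, s x = σ k)
    (hmed : ∀ k, IsMedian (condP μ P (C k)) (σ k)) :
    Risk μ P s - RiskStar μ P ≤ M * δ := by
  set g : E → ℝ := fun x => majorityLoss (P x) (P x)
  have hg : Integrable g μ := integrable_majorityLoss hP hmeas hmeas
  have hcell : ∀ k, Set.EqOn (fun x => L (P x) (s x) - g x) (fun x => L (P x) (σ k) - g x) (C k) :=
    fun k x hx => by simp only [hs k x hx]
  have hint : ∀ k, IntegrableOn (fun x => L (P x) (s x) - g x) (C k) μ := fun k =>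
    ((integrable_L hP hmeas measurable_const).sub hg).integrableOn.congr_fun
      (hcell k).symm (hC k)
  have hLs : Integrable (fun x => L (P x) (s x)) μ := by
    have hdiff : Integrable (fun x => L (P x) (s x) - g x) μ := by
      rw [← integrableOn_univ, ← hcover]
      exact integrableOn_finite_iUnion.mpr hint
    exact (hdiff.add hg).congr (ae_of_all _ fun x => sub_add_cancel _ _)
  calc Risk μ P s - RiskStar μ P ≤ ∫ x, (L (P x) (s x) - g x) ∂μ := by
        rw [integral_sub hLs hg, Risk]
        linarith [integral_majorityLoss_le_riskStar (μ := μ) hP hmeas]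
    _ = ∑ k, ∫ x in C k, (L (P x) (σ k) - g x) ∂μ := by
        rw [← setIntegral_univ, ← hcover, integral_iUnion_fintype hC (fun k l => hdisj k l) hint]
        exact Finset.sum_congr rfl fun k _ => setIntegral_congr_fun (hC k) (hcell k)
    _ ≤ ∑ k, μ.real (C k) * (M * δ) := Finset.sum_le_sum fun k _ =>
        setIntegral_L_sub_majorityLoss_le hP hmeas hT (hC k) (hpos k)
          (fun x hx y hy => (hLip x y).trans (mul_le_mul_of_nonneg_left (hδ k x hx y hy) hM))
          (hmed k)
    _ = M * δ := by
        rw [← Finset.sum_mul, ← measureReal_iUnion_fintype (fun k l => hdisj k l) hC, hcover,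
          probReal_univ, one_mul]
end

section
/- If each conditional distribution P_x is strictly stochastically transitive with min_{i<j} |p_{i,j}(x) - 1/2| ≥ H > 0, then for any ranking rule s, E[d_τ(σ*_{P_X}, s(X))] ≤ (1/H)(R(s) - R*). -/
open Finset

namespace Stmt16Aux

noncomputable def g {n : ℕ} (Q : Equiv.Perm (Fin n) → ℝ) (σ : Equiv.Perm (Fin n)) (a b : Fin n) : ℝ :=
  ∑ τ : Equiv.Perm (Fin n), Q τ *
    (if (((τ a : ℕ) : ℤ) - ((τ b : ℕ) : ℤ)) * (((σ a : ℕ) : ℤ) - ((σ b : ℕ) : ℤ)) < 0 then 1 else 0)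

lemma L_eq {n : ℕ} (Q : Equiv.Perm (Fin n) → ℝ) (σ : Equiv.Perm (Fin n)) :
    L Q σ = ∑ p ∈ pairs n, g Q σ p.1 p.2 := by
  unfold L dtau g
  rw [Finset.sum_comm]
  · exact Finset.sum_congr rfl fun τ _ => by rw [Finset.mul_sum]

lemma cond_iff {n : ℕ} (τ σ : Equiv.Perm (Fin n)) {a b : Fin n} (hab : a ≠ b) :
    ((((τ a : ℕ) : ℤ) - ((τ b : ℕ) : ℤ)) * (((σ a : ℕ) : ℤ) - ((σ b : ℕ) : ℤ)) < 0)
      ↔ ((σ a < σ b ∧ τ b < τ a) ∨ (σ b < σ a ∧ τ a < τ b)) := by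
  have h1 : (τ a).val ≠ (τ b).val := by
    simp [Fin.val_eq_val, EmbeddingLike.apply_eq_iff_eq, hab]
  have h2 : (σ a).val ≠ (σ b).val := by
    simp [Fin.val_eq_val, EmbeddingLike.apply_eq_iff_eq, hab]
  rw [mul_neg_iff]
  simp only [Fin.lt_def]
  omega

lemma g_eq_lt {n : ℕ} (Q : Equiv.Perm (Fin n) → ℝ) (σ : Equiv.Perm (Fin n)) {a b : Fin n}
    (hab : a ≠ b) (hσ : σ a < σ b) : g Q σ a b = pp Q b a := by
  unfold g pp
  refine Finset.sum_congr rfl fun τ _ => ?_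
  congr 1
  refine if_congr ?_ rfl rfl
  rw [cond_iff τ σ hab]
  constructor
  · rintro (⟨_, h⟩ | ⟨h, _⟩)
    · exact h
    · exact absurd hσ (asymm h)
  · exact fun h => Or.inl ⟨hσ, h⟩

lemma g_eq_gt {n : ℕ} (Q : Equiv.Perm (Fin n) → ℝ) (σ : Equiv.Perm (Fin n)) {a b : Fin n}
    (hab : a ≠ b) (hσ : σ b < σ a) : g Q σ a b = pp Q a b := by
  unfold g pp
  refine Finset.sum_congr rfl fun τ _ => ?_
  congr 1
  refine if_congr ?_ rfl rfl
  rw [cond_iff τ σ hab]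
  constructor
  · rintro (⟨h, _⟩ | ⟨_, h⟩)
    · exact absurd hσ (asymm h)
    · exact h
  · exact fun h => Or.inr ⟨hσ, h⟩

lemma pp_add {n : ℕ} {Q : Equiv.Perm (Fin n) → ℝ} (hQ : IsProb Q) {a b : Fin n} (hab : a ≠ b) :
    pp Q a b + pp Q b a = 1 := by
  unfold pp
  rw [← Finset.sum_add_distrib]
  have key : ∀ τ : Equiv.Perm (Fin n),
      Q τ * (if τ a < τ b then (1:ℝ) else 0) + Q τ * (if τ b < τ a then (1:ℝ) else 0) = Q τ := by
    intro τ
    have h : τ a ≠ τ b := fun h => hab (τ.injective h)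
    rcases lt_or_gt_of_ne h with h' | h'
    · rw [if_pos h', if_neg (asymm h')]; ring
    · rw [if_neg (asymm h'), if_pos h']; ring
  rw [Finset.sum_congr rfl fun τ _ => key τ]
  exact hQ.2

section Median

variable {n : ℕ} {Q : Equiv.Perm (Fin n) → ℝ} (hQ : IsProb Q) (hT : StrictStochTrans Q)

include hQ hT in
lemma pp_ne {a b : Fin n} (hab : a ≠ b) : pp Q a b ≠ 1/2 := by
  rcases lt_or_gt_of_ne hab with h | h
  · exact hT.2 a b h
  · have h1 := hT.2 b a h
    have h2 := pp_add hQ hab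
    intro h3; apply h1; linarith

include hQ hT in
lemma pref_total {a b : Fin n} (hab : a ≠ b) : 1/2 < pp Q a b ∨ 1/2 < pp Q b a := by
  have h1 := pp_ne hQ hT hab
  have h2 := pp_add hQ hab
  rcases lt_trichotomy (pp Q a b) (1/2) with h | h | h
  · right; linarith
  · exact absurd h h1
  · left; exact h

include hQ hT in
lemma pref_trans {a b c : Fin n} (hab : a ≠ b) (hbc : b ≠ c)
    (h1 : 1/2 < pp Q a b) (h2 : 1/2 < pp Q b c) : 1/2 < pp Q a c := by
  have hac : a ≠ c := by
    rintro rfl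
    have := pp_add hQ hab
    linarith
  have h3 := hT.1 a b c (le_of_lt h1) (le_of_lt h2)
  exact lt_of_le_of_ne h3 (Ne.symm (pp_ne hQ hT hac))

variable {σ : Equiv.Perm (Fin n)} (hmed : IsMedian Q σ)

include hQ hT hmed in
lemma no_adjacent_violation {a b : Fin n} (hab : a ≠ b) (hpref : 1/2 < pp Q a b)
    (hadj : (σ b).val + 1 = (σ a).val) : False := by
  set σ' : Equiv.Perm (Fin n) := σ.trans (Equiv.swap (σ a) (σ b)) with hσ'
  have hval : ∀ z, (σ' z).val = if z = a then (σ b).val else if z = b then (σ a).val else (σ z).val := by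
    intro z
    by_cases hza : z = a
    · subst hza; simp [hσ', Equiv.trans_apply, Equiv.swap_apply_left]
    · by_cases hzb : z = b
      · subst hzb; simp [hσ', Equiv.trans_apply, Equiv.swap_apply_right, hza]
      · have h1 : σ z ≠ σ a := fun h => hza (σ.injective h)
        have h2 : σ z ≠ σ b := fun h => hzb (σ.injective h)
        simp [hσ', Equiv.trans_apply, Equiv.swap_apply_of_ne_of_ne h1 h2, hza, hzb]
  have hinj : ∀ u v : Fin n, u ≠ v → (σ u).val ≠ (σ v).val := by
    intro u v huv
    simp [Fin.val_eq_val, EmbeddingLike.apply_eq_iff_eq, huv]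
  -- order preserved for pairs other than {a,b}
  have hpres : ∀ x y : Fin n, x ≠ y → ¬(x = a ∧ y = b) → ¬(x = b ∧ y = a) →
      (σ x < σ y ↔ σ' x < σ' y) := by
    intro x y hxy h1 h2
    have hxy' := hinj x y hxy
    rw [Fin.lt_def, Fin.lt_def, hval x, hval y]
    by_cases hxa : x = a
    · have hyb : y ≠ b := fun h => h1 ⟨hxa, h⟩
      have hya : y ≠ a := fun h => hxy (hxa.trans h.symm)
      rw [if_pos hxa, if_neg hya, if_neg hyb]
      subst hxa
      have h3 := hinj x y hxy
      have h4 := hinj b y (Ne.symm hyb)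
      omega
    · by_cases hxb : x = b
      · have hya : y ≠ a := fun h => h2 ⟨hxb, h⟩
        have hyb : y ≠ b := fun h => hxy (hxb.trans h.symm)
        rw [if_neg hxa, if_pos hxb, if_neg hya, if_neg hyb]
        subst hxb
        have h3 := hinj x y hxy
        have h4 := hinj a y (Ne.symm hya)
        omega
      · by_cases hya : y = a
        · rw [if_neg hxa, if_neg hxb, if_pos hya]
          subst hya
          have h3 := hinj x y hxy
          have h4 := hinj x b hxb
          omega
        · by_cases hyb : y = b
          · rw [if_neg hxa, if_neg hxb, if_neg hya, if_pos hyb]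
            subst hyb
            have h3 := hinj x y hxy
            have h4 := hinj x a hxa
            omega
          · rw [if_neg hxa, if_neg hxb, if_neg hya, if_neg hyb]
  have hσ'a : σ' a = σ b := by simp [hσ', Equiv.trans_apply, Equiv.swap_apply_left]
  have hσ'b : σ' b = σ a := by simp [hσ', Equiv.trans_apply, Equiv.swap_apply_right]
  have hσba : σ b < σ a := by rw [Fin.lt_def]; omega
  -- the distinguished pair
  set p0 : Fin n × Fin n := if a < b then (a, b) else (b, a) with hp0
  have hp0mem : p0 ∈ pairs n := by
    rcases lt_or_gt_of_ne hab with h | h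
    · simp [hp0, pairs, h]
    · simp [hp0, pairs, not_lt_of_gt h, h]
  have hdiff : L Q σ - L Q σ' = pp Q a b - pp Q b a := by
    rw [L_eq, L_eq, ← Finset.sum_sub_distrib]
    rw [Finset.sum_eq_single_of_mem p0 hp0mem]
    · rcases lt_or_gt_of_ne hab with h | h
      · have hp : p0 = (a, b) := by simp [hp0, h]
        rw [hp]
        have e1 : g Q σ a b = pp Q a b := g_eq_gt Q σ hab hσba
        have e2 : g Q σ' a b = pp Q b a := by
          apply g_eq_lt Q σ' hab
          rw [hσ'a, hσ'b]; exact hσba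
        simp only [e1, e2]
      · have hp : p0 = (b, a) := by simp [hp0, not_lt_of_gt h]
        rw [hp]
        have e1 : g Q σ b a = pp Q a b := g_eq_lt Q σ (Ne.symm hab) hσba
        have e2 : g Q σ' b a = pp Q b a := by
          apply g_eq_gt Q σ' (Ne.symm hab)
          rw [hσ'a, hσ'b]; exact hσba
        simp only [e1, e2]
    · intro p hpmem hpne
      obtain ⟨x, y⟩ := p
      have hxy : x < y := by simpa [pairs] using hpmem
      have hxyne : x ≠ y := ne_of_lt hxy
      have hnot1 : ¬(x = a ∧ y = b) := by
        rintro ⟨rfl, rfl⟩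
        apply hpne
        simp [hp0, hxy]
      have hnot2 : ¬(x = b ∧ y = a) := by
        rintro ⟨rfl, rfl⟩
        apply hpne
        simp [hp0, not_lt_of_gt hxy]
      have hiff := hpres x y hxyne hnot1 hnot2
      rcases lt_or_gt_of_ne (fun h : σ x = σ y => hxyne (σ.injective h)) with h | h
      · rw [g_eq_lt Q σ hxyne h, g_eq_lt Q σ' hxyne (hiff.mp h), sub_self]
      · have h' : ¬ (σ' x < σ' y) := fun hc => absurd (hiff.mpr hc) (asymm h)
        have h'' : σ' y < σ' x := by
          rcases lt_or_gt_of_ne (fun hc : σ' x = σ' y => hxyne (σ'.injective hc)) with hc | hc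
          · exact absurd hc h'
          · exact hc
        rw [g_eq_gt Q σ hxyne h, g_eq_gt Q σ' hxyne h'', sub_self]
  have hmed' := hmed σ'
  have hsum := pp_add hQ hab
  linarith

include hQ hT hmed in
lemma median_pref : ∀ a b : Fin n, a ≠ b → 1/2 < pp Q a b → σ a < σ b := by
  have main : ∀ k : ℕ, ∀ a b : Fin n, a ≠ b → 1/2 < pp Q a b →
      (σ a).val = (σ b).val + k + 1 → False := by
    intro k
    induction k using Nat.strong_induction_on with
    | _ k ih =>
      intro a b hab hpref hk
      rcases Nat.eq_zero_or_pos k with rfl | hkpos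
      · exact no_adjacent_violation hQ hT hmed hab hpref (by omega)
      · have hm : (σ b).val + 1 < n := by
          have h1 := (σ a).isLt
          omega
        set c : Fin n := σ.symm ⟨(σ b).val + 1, hm⟩ with hc
        have hσc : (σ c).val = (σ b).val + 1 := by
          simp [hc]
        have hca : c ≠ a := by
          intro h
          rw [h] at hσc; omega
        have hcb : c ≠ b := by
          intro h
          rw [h] at hσc; omega
        rcases pref_total hQ hT (show a ≠ c from Ne.symm hca) with h | h
        · exact ih (k - 1) (by omega) a c (Ne.symm hca) h (by omega)
        · have h2 : 1/2 < pp Q c b := pref_trans hQ hT hca hab h hpref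
          exact ih 0 hkpos c b hcb h2 (by omega)
  intro a b hab hpref
  rcases lt_or_gt_of_ne (fun h : σ a = σ b => hab (σ.injective h)) with h | h
  · exact h
  · exact absurd (Fin.lt_def.mp h)
      (fun hlt => main ((σ a).val - (σ b).val - 1) a b hab hpref (by omega))

include hQ hT hmed in
lemma pointwise (H : ℝ) (hHpos : 0 < H) (hHQ : ∀ i j : Fin n, i < j → H ≤ |pp Q i j - 1/2|)
    (σ2 : Equiv.Perm (Fin n)) : H * dtau σ σ2 ≤ L Q σ2 - L Q σ := by
  have hord : ∀ u v : Fin n, u ≠ v → σ u < σ v → 1/2 < pp Q u v := by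
    intro u v huv h
    rcases pref_total hQ hT huv with h1 | h1
    · exact h1
    · exact absurd (median_pref hQ hT hmed v u (Ne.symm huv) h1) (asymm h)
  rw [L_eq, L_eq, ← Finset.sum_sub_distrib]
  unfold dtau
  rw [Finset.mul_sum]
  apply Finset.sum_le_sum
  intro p hp
  obtain ⟨x, y⟩ := p
  have hxy : x < y := by simpa [pairs] using hp
  have hxyne : x ≠ y := ne_of_lt hxy
  have hHxy := hHQ x y hxy
  have hsum := pp_add hQ hxyne
  by_cases hd : (((σ x : ℕ) : ℤ) - ((σ y : ℕ) : ℤ)) * (((σ2 x : ℕ) : ℤ) - ((σ2 y : ℕ) : ℤ)) < 0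
  · rw [if_pos hd, mul_one]
    rw [cond_iff σ σ2 hxyne] at hd
    rcases hd with ⟨h1, h2⟩ | ⟨h1, h2⟩
    · have hp1 : 1/2 < pp Q y x := hord y x (Ne.symm hxyne) h2
      have habs : H ≤ 1/2 - pp Q x y := by
        rw [abs_of_nonpos (by linarith)] at hHxy; linarith
      rw [g_eq_lt Q σ2 hxyne h1, g_eq_gt Q σ hxyne h2]
      linarith
    · have hp1 : 1/2 < pp Q x y := hord x y hxyne h2
      have habs : H ≤ pp Q x y - 1/2 := by
        rw [abs_of_nonneg (by linarith)] at hHxy; linarith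
      rw [g_eq_gt Q σ2 hxyne h1, g_eq_lt Q σ hxyne h2]
      linarith
  · rw [if_neg hd, mul_zero]
    rw [cond_iff σ σ2 hxyne] at hd
    rcases lt_or_gt_of_ne (fun h : σ x = σ y => hxyne (σ.injective h)) with h | h
    · have h2 : σ2 x < σ2 y := by
        rcases lt_or_gt_of_ne (fun hc : σ2 x = σ2 y => hxyne (σ2.injective hc)) with hc | hc
        · exact hc
        · exact absurd (Or.inr ⟨hc, h⟩) hd
      rw [g_eq_lt Q σ2 hxyne h2, g_eq_lt Q σ hxyne h, sub_self]
    · have h2 : σ2 y < σ2 x := by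
        rcases lt_or_gt_of_ne (fun hc : σ2 x = σ2 y => hxyne (σ2.injective hc)) with hc | hc
        · exact absurd (Or.inl ⟨hc, h⟩) hd
        · exact hc
      rw [g_eq_gt Q σ2 hxyne h2, g_eq_gt Q σ hxyne h, sub_self]

end Median

end Stmt16Aux

open MeasureTheory

theorem stmt_16 {n : ℕ} {X : Type*} [MeasurableSpace X]
    (μ : Measure X) [IsProbabilityMeasure μ]
    (P : X → Equiv.Perm (Fin n) → ℝ)
    (hP : ∀ x, IsProb (P x)) (hmeas : ∀ τ, Measurable fun x => P x τ)
    (H : ℝ) (hHpos : 0 < H)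
    (hH : ∀ x, ∀ i j : Fin n, i < j → H ≤ |pp (P x) i j - 1/2|)
    (hTx : ∀ x, StrictStochTrans (P x))
    (sstar : X → Equiv.Perm (Fin n)) (hsstarm : Measurable sstar)
    (hmed : ∀ x, IsMedian (P x) (sstar x))
    (s : X → Equiv.Perm (Fin n)) (hs : Measurable s) :
    ∫ x, dtau (sstar x) (s x) ∂μ ≤ (1 / H) * (Risk μ P s - Risk μ P sstar) := by
  classical
  set C : ℝ := ((pairs n).card : ℝ) with hC
  have dtau_nonneg : ∀ σ σ' : Equiv.Perm (Fin n), 0 ≤ dtau σ σ' := by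
    intro σ σ'
    unfold dtau
    apply Finset.sum_nonneg
    intro p _
    split <;> norm_num
  have dtau_le : ∀ σ σ' : Equiv.Perm (Fin n), dtau σ σ' ≤ C := by
    intro σ σ'
    unfold dtau
    calc (∑ p ∈ pairs n, if (((σ p.1 : ℕ) : ℤ) - ((σ p.2 : ℕ) : ℤ)) *
            (((σ' p.1 : ℕ) : ℤ) - ((σ' p.2 : ℕ) : ℤ)) < 0 then (1:ℝ) else 0)
        ≤ ∑ _p ∈ pairs n, (1:ℝ) := Finset.sum_le_sum fun p _ => by split <;> norm_num
      _ = C := by rw [Finset.sum_const, nsmul_eq_mul, mul_one]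
  have L_nonneg : ∀ x (σ' : Equiv.Perm (Fin n)), 0 ≤ L (P x) σ' := by
    intro x σ'
    apply Finset.sum_nonneg
    intro τ _
    exact mul_nonneg ((hP x).1 τ) (dtau_nonneg τ σ')
  have L_le : ∀ x (σ' : Equiv.Perm (Fin n)), L (P x) σ' ≤ C := by
    intro x σ'
    unfold L
    calc (∑ τ : Equiv.Perm (Fin n), P x τ * dtau τ σ')
        ≤ ∑ τ : Equiv.Perm (Fin n), P x τ * C :=
          Finset.sum_le_sum fun τ _ => mul_le_mul_of_nonneg_left (dtau_le τ σ') ((hP x).1 τ)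
      _ = C := by rw [← Finset.sum_mul, (hP x).2, one_mul]
  haveI msc : MeasurableSingletonClass (Equiv.Perm (Fin n)) :=
    ⟨fun _ => MeasurableSpace.measurableSet_top⟩
  have hfm : Measurable fun x => dtau (sstar x) (s x) := by
    have h1 : Measurable fun x => (sstar x, s x) := hsstarm.prodMk hs
    have h2 : Measurable fun p : Equiv.Perm (Fin n) × Equiv.Perm (Fin n) => dtau p.1 p.2 :=
      measurable_of_countable _
    exact fun S hS => h1 (h2 hS)
  have hLm : ∀ t : X → Equiv.Perm (Fin n), Measurable t →
      Measurable fun x => L (P x) (t x) := by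
    intro t ht
    unfold L
    refine Finset.measurable_sum _ fun τ _ => (hmeas τ).mul ?_
    have h2 : Measurable fun σ' : Equiv.Perm (Fin n) => dtau τ σ' := measurable_of_countable _
    exact fun S hS => ht (h2 hS)
  have hbound : ∀ f : X → ℝ, Measurable f → (∀ x, |f x| ≤ C) → Integrable f μ := by
    intro f hm hb
    exact (integrable_const C).mono' hm.aestronglyMeasurable
      (ae_of_all _ fun x => by rw [Real.norm_eq_abs]; exact hb x)
  have hf_int : Integrable (fun x => dtau (sstar x) (s x)) μ :=
    hbound _ hfm fun x => by rw [abs_of_nonneg (dtau_nonneg _ _)]; exact dtau_le _ _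
  have hLs_int : Integrable (fun x => L (P x) (s x)) μ :=
    hbound _ (hLm s hs) fun x => by rw [abs_of_nonneg (L_nonneg x _)]; exact L_le x _
  have hLst_int : Integrable (fun x => L (P x) (sstar x)) μ :=
    hbound _ (hLm sstar hsstarm) fun x => by
      rw [abs_of_nonneg (L_nonneg x _)]; exact L_le x _
  have hpt : ∀ x, dtau (sstar x) (s x) ≤ (1/H) * (L (P x) (s x) - L (P x) (sstar x)) := by
    intro x
    have h := Stmt16Aux.pointwise (hP x) (hTx x) (hmed x) H hHpos (hH x) (s x)
    rw [one_div_mul_eq_div]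
    rw [le_div_iff₀ hHpos]
    linarith
  calc (∫ x, dtau (sstar x) (s x) ∂μ)
      ≤ ∫ x, (1/H) * (L (P x) (s x) - L (P x) (sstar x)) ∂μ :=
        integral_mono hf_int ((hLs_int.sub hLst_int).const_mul _) hpt
    _ = (1/H) * ∫ x, (L (P x) (s x) - L (P x) (sstar x)) ∂μ := MeasureTheory.integral_const_mul _ _
    _ = (1/H) * (Risk μ P s - Risk μ P sstar) := by
        rw [integral_sub hLs_int hLst_int]; rfl
end
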